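/- arXiv:2106.00975 — 3 statements merged into one kernel-verified Lean document; each statement's English description precedes it below -/
import Mathlib

section
/- If $\mathcal{X}$ is a nearly truncation quasi-greedy basis of a quasi-Banach space, then its nearly truncation quasi-greedy function $\lambda$ is non-increasing on $(0,1)$. -/
open Finset Set

/-- A (quasi-)basis of a quasi-Banach space: a quasi-norm `q` with modulus of
concavity `κ`, together with a norm-bounded biorthogonal system `(e, c)`. -/
structure QBasis (X : Type*) [AddCommGroup X] [Module ℝ X] where
  q : X → ℝ
  κ : ℝ
  one_le_κ : 1 ≤ κ
  q_nonneg : ∀ f, 0 ≤ q f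
  q_eq_zero_iff : ∀ f, q f = 0 ↔ f = 0
  q_smul : ∀ (t : ℝ) (f : X), q (t • f) = |t| * q f
  q_add : ∀ f g, q (f + g) ≤ κ * (q f + q g)
  e : ℕ → X
  c : ℕ → X →ₗ[ℝ] ℝ
  biorth : ∀ m n, c m (e n) = if m = n then (1 : ℝ) else 0
  e_bdd : ∃ M, ∀ n, q (e n) ≤ M
  c_bdd : ∃ M, ∀ n f, |c n f| ≤ M * q f

namespace QBasis

variable {X : Type*} [AddCommGroup X] [Module ℝ X] (B : QBasis X)

/-- Coordinate projection on a finite set `A`. -/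
noncomputable def S (A : Finset ℕ) (f : X) : X := ∑ n ∈ A, B.c n f • B.e n

/-- The set `𝒬` of vectors with coefficients in the unit ball of `ℓ∞`. -/
def inQ (f : X) : Prop := ∀ n, |B.c n f| ≤ 1

/-- `A` is the set `A(a,f) = {n : |c n f| ≥ a}` of coefficients above the threshold `a`. -/
def thrSet (a : ℝ) (f : X) (A : Finset ℕ) : Prop := ∀ n, n ∈ A ↔ a ≤ |B.c n f|

/-- `A` is a greedy set of `f`. -/
def greedySet (f : X) (A : Finset ℕ) : Prop :=
  ∀ n ∈ A, ∀ k, k ∉ A → |B.c k f| ≤ |B.c n f|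

/-- The restricted truncation operator associated with a finite set `A`:
`R(f,A) = min_{n∈A} |c n f| ∑_{n∈A} sgn (c n f) • e n`. -/
noncomputable def R (A : Finset ℕ) (f : X) : X :=
  if h : A.Nonempty then
    (A.inf' h fun n => |B.c n f|) • ∑ n ∈ A, Real.sign (B.c n f) • B.e n
  else 0

/-- `lam` is the nearly truncation quasi-greedy function of the basis: for every
`a ∈ (0,1)`, `lam a` is the smallest constant `C` with `q (R^{(a)} f) ≤ C * q f`
for all `f ∈ 𝒬`. -/
def NTQGFun (lam : ℝ → ℝ) : Prop :=
  ∀ a ∈ Set.Ioo (0 : ℝ) 1,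
    (∀ f, B.inQ f → ∀ A : Finset ℕ, B.thrSet a f A → B.q (B.R A f) ≤ lam a * B.q f) ∧
    (∀ C : ℝ, (∀ f, B.inQ f → ∀ A : Finset ℕ, B.thrSet a f A → B.q (B.R A f) ≤ C * B.q f) →
      lam a ≤ C)

/-- The basis is nearly truncation quasi-greedy. -/
def NearlyTQG : Prop :=
  ∀ a ∈ Set.Ioo (0 : ℝ) 1, ∃ C : ℝ,
    ∀ f, B.inQ f → ∀ A : Finset ℕ, B.thrSet a f A → B.q (B.R A f) ≤ C * B.q f

/-- The basis is nearly unconditional. -/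
def NearlyUnconditional : Prop :=
  ∀ a ∈ Set.Ioo (0 : ℝ) 1, ∃ C : ℝ,
    ∀ f, B.inQ f → ∀ Aa A : Finset ℕ, B.thrSet a f Aa → A ⊆ Aa → B.q (B.S A f) ≤ C * B.q f

/-- `phi` is the nearly unconditionality function: `phi a` is the smallest `C` with
`q (S_A f) ≤ C * q f` for `f ∈ 𝒬` and `A ⊆ A(a,f)`. -/
def NUFun (phi : ℝ → ℝ) : Prop :=
  ∀ a ∈ Set.Ioo (0 : ℝ) 1,
    (∀ f, B.inQ f → ∀ Aa A : Finset ℕ, B.thrSet a f Aa → A ⊆ Aa →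
      B.q (B.S A f) ≤ phi a * B.q f) ∧
    (∀ C : ℝ, (∀ f, B.inQ f → ∀ Aa A : Finset ℕ, B.thrSet a f Aa → A ⊆ Aa →
      B.q (B.S A f) ≤ C * B.q f) → phi a ≤ C)

/-- `theta` is the thresholding-boundedness function: `theta a` is the smallest `C` with
`q (S_{A(a,f)} f) ≤ C * q f` for `f ∈ 𝒬`. -/
def ThetaFun (theta : ℝ → ℝ) : Prop :=
  ∀ a ∈ Set.Ioo (0 : ℝ) 1,
    (∀ f, B.inQ f → ∀ A : Finset ℕ, B.thrSet a f A → B.q (B.S A f) ≤ theta a * B.q f) ∧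
    (∀ C : ℝ, (∀ f, B.inQ f → ∀ A : Finset ℕ, B.thrSet a f A → B.q (B.S A f) ≤ C * B.q f) →
      theta a ≤ C)

/-- The basis is truncation quasi-greedy: the restricted truncation operators are
uniformly bounded over greedy sets. -/
def TruncationQG : Prop :=
  ∃ C : ℝ, ∀ f (A : Finset ℕ), B.greedySet f A → B.q (B.R A f) ≤ C * B.q f

end QBasis

/-!
Multiplying `f ∈ 𝒬` by `t = a / b ∈ (0, 1]` keeps it in `𝒬`, turns `A(b, f)` into
`A(a, t • f)`, and commutes with the restricted truncation operator. Hence every constant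
valid at the threshold `a` is valid at the threshold `b`, and minimality gives `λ(b) ≤ λ(a)`.
-/

lemma Real.sign_mul_of_pos {t : ℝ} (ht : 0 < t) (x : ℝ) : Real.sign (t * x) = Real.sign x := by
  rcases lt_trichotomy x 0 with hx | rfl | hx
  · rw [Real.sign_of_neg hx, Real.sign_of_neg (mul_neg_of_pos_of_neg ht hx)]
  · rw [mul_zero]
  · rw [Real.sign_of_pos hx, Real.sign_of_pos (mul_pos ht hx)]

namespace QBasis

variable {X : Type*} [AddCommGroup X] [Module ℝ X] (B : QBasis X)

def IsRestrictedTruncationBound (a C : ℝ) : Prop :=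
  ∀ f, B.inQ f → ∀ A : Finset ℕ, B.thrSet a f A → B.q (B.R A f) ≤ C * B.q f

lemma c_smul (n : ℕ) (t : ℝ) (f : X) : B.c n (t • f) = t * B.c n f := by
  rw [map_smul, smul_eq_mul]

lemma inQ_smul {t : ℝ} {f : X} (ht : |t| ≤ 1) (hf : B.inQ f) : B.inQ (t • f) := fun n => by
  rw [c_smul, abs_mul]
  exact mul_le_one₀ ht (abs_nonneg _) (hf n)

lemma thrSet_smul {t a : ℝ} {f : X} {A : Finset ℕ} (ht : 0 < t) (hA : B.thrSet a f A) :
    B.thrSet (t * a) (t • f) A := fun n => by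
  rw [c_smul, abs_mul, abs_of_pos ht, mul_le_mul_iff_right₀ ht, hA n]

lemma R_smul {t : ℝ} (ht : 0 < t) (A : Finset ℕ) (f : X) : B.R A (t • f) = t • B.R A f := by
  unfold R
  split_ifs with hA
  · have hinf : (A.inf' hA fun n => |B.c n (t • f)|) = t * A.inf' hA fun n => |B.c n f| := by
      rw [apply_inf'_eq_inf'_comp hA (fun x => t * x) fun x y => mul_min_of_nonneg x y ht.le]
      exact inf'_congr hA rfl fun n _ => by rw [c_smul, abs_mul, abs_of_pos ht]; rfl
    rw [hinf, mul_smul]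
    simp only [c_smul, Real.sign_mul_of_pos ht]
  · rw [smul_zero]

lemma isRestrictedTruncationBound_of_le {a b C : ℝ} (ha : 0 < a) (hab : a ≤ b)
    (hC : B.IsRestrictedTruncationBound a C) : B.IsRestrictedTruncationBound b C := by
  intro f hf A hA
  have hb : 0 < b := ha.trans_le hab
  set t := a / b
  have ht : 0 < t := div_pos ha hb
  have htb : t * b = a := div_mul_cancel₀ a hb.ne'
  have ht1 : |t| ≤ 1 := by rw [abs_of_pos ht]; exact div_le_one_of_le₀ hab hb.le
  have hscaled := hC (t • f) (B.inQ_smul ht1 hf) A (htb ▸ B.thrSet_smul ht hA)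
  rw [R_smul B ht, B.q_smul, B.q_smul, abs_of_pos ht, mul_left_comm] at hscaled
  exact le_of_mul_le_mul_left hscaled ht

end QBasis

/-- the nearly truncation quasi-greedy function of a nearly truncation
quasi-greedy basis is non-increasing on `(0,1)`. -/
theorem stmt0 {X : Type*} [AddCommGroup X] [Module ℝ X] (B : QBasis X)
    (lam : ℝ → ℝ) (hlam : B.NTQGFun lam) :
    ∀ a ∈ Set.Ioo (0 : ℝ) 1, ∀ b ∈ Set.Ioo (0 : ℝ) 1, a ≤ b → lam b ≤ lam a := by
  intro a ha b hb hab
  exact (hlam b hb).2 (lam a) (B.isRestrictedTruncationBound_of_le ha.1 hab (hlam a ha).1)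
end

section
/- Every truncation quasi-greedy basis of a quasi-Banach space is nearly unconditional. -/
open Finset Set

/-!
For `f ∈ 𝒬`, write `1_{ε,A} = ∑_{n ∈ A} sgn (c n f) e n`. Truncation quasi-greediness bounds
`q 1_{ε,A}` by `q f` when all coefficients on `A` exceed a level `s` close to `1`: adding
`(1 - s) 1_{ε,A}` to `f` makes `A` a greedy set whose restricted truncation dominates `1_{ε,A}`,
and the added term is absorbed.

To go down to a level `a`, clip the coefficients above `s` to modulus `s` and rescale by `s⁻¹`.
The clipped part is a combination of such `1_{ε,A}` with coefficients in `[0, 1 - s]`, so the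
quasi-norm grows by a bounded factor, while the set where `|c n f| ≥ s b` becomes the set where
the coefficient is `≥ b`. After `k` steps, with `s ^ (k+1) < a ≤ s ^ k`, we are back above `s`,
and `S_A f = ∑_{n ∈ A} |c n f| sgn (c n f) e n` is recovered from the `1_{ε,A'}`, `A' ⊆ A`, by
the same summation estimate. In a quasi-Banach space that estimate is proved by expanding the
coefficients in a base `N > κ`.
-/

open Filter Topology

namespace Real

theorem abs_mul_sign (x : ℝ) : |x| * sign x = x := by
  rcases lt_trichotomy x 0 with h | rfl | h
  · rw [sign_of_neg h, abs_of_neg h]; ring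
  · simp
  · rw [sign_of_pos h, abs_of_pos h]; ring

theorem sign_mul_of_pos_s4 {u : ℝ} (hu : 0 < u) (x : ℝ) : sign (u * x) = sign x := by
  rcases lt_trichotomy x 0 with h | rfl | h
  · rw [sign_of_neg h, sign_of_neg (mul_neg_of_pos_of_neg hu h)]
  · simp
  · rw [sign_of_pos h, sign_of_pos (mul_pos hu h)]

theorem sign_sign (x : ℝ) : sign (sign x) = sign x := by
  rcases sign_apply_eq x with h | h | h <;> rw [h] <;> simp [sign_of_neg, sign_one]

theorem abs_sign_of_ne_zero {x : ℝ} (hx : x ≠ 0) : |sign x| = 1 := by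
  rcases sign_apply_eq_of_ne_zero x hx with h | h <;> simp [h]

theorem abs_sign_le_one (x : ℝ) : |sign x| ≤ 1 := by
  rcases sign_apply_eq x with h | h | h <;> simp [h]

end Real

theorem Finset.sum_nsmul_eq_sum_range_sum_filter {ι M : Type*} [AddCommMonoid M] (D : Finset ι)
    (j : ι → ℕ) {m : ℕ} (hj : ∀ i ∈ D, j i ≤ m) (σ : ι → M) :
    ∑ i ∈ D, j i • σ i = ∑ d ∈ range m, ∑ i ∈ D with d < j i, σ i := by
  simp_rw [sum_filter]
  rw [sum_comm]
  refine sum_congr rfl fun i hi => ?_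
  have hrange : {d ∈ range m | d < j i} = range (j i) := by
    ext d; simp only [Finset.mem_filter, Finset.mem_range]; have := hj i hi; omega
  rw [← sum_filter, hrange, sum_const, card_range]

namespace QBasis

variable {X : Type*} [AddCommGroup X] [Module ℝ X] (B : QBasis X)

theorem q_zero : B.q 0 = 0 := by
  simpa using B.q_smul 0 0

theorem q_neg (f : X) : B.q (-f) = B.q f := by
  simpa using B.q_smul (-1) f

theorem q_sub_le (f g : X) : B.q (f - g) ≤ B.κ * (B.q f + B.q g) := by
  simpa [sub_eq_add_neg, B.q_neg] using B.q_add f (-g)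

theorem q_sum_le {ι : Type*} (s : Finset ι) (x : ι → X) {P : ℝ}
    (h : ∀ i ∈ s, B.q (x i) ≤ P) :
    B.q (∑ i ∈ s, x i) ≤ B.κ ^ #s * (#s * P) := by
  classical
  induction s using Finset.induction_on with
  | empty => simp [B.q_zero]
  | insert i s hi ih =>
    have hκ : 0 ≤ B.κ := by linarith [B.one_le_κ]
    have hxi := h i (mem_insert_self i s)
    have hs := ih fun j hj => h j (mem_insert_of_mem hj)
    have hP : 0 ≤ P := (B.q_nonneg _).trans hxi
    have hpow : 1 ≤ B.κ ^ #s := one_le_pow₀ B.one_le_κ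
    rw [sum_insert hi, card_insert_of_notMem hi, pow_succ]
    calc B.q (x i + ∑ j ∈ s, x j) ≤ B.κ * (P + B.κ ^ #s * (#s * P)) :=
          (B.q_add _ _).trans (by gcongr)
      _ ≤ B.κ ^ #s * B.κ * ((#s + 1 : ℕ) * P) := by
          push_cast
          nlinarith [mul_nonneg (sub_nonneg.2 hpow) (mul_nonneg hκ hP)]

-- One base-`N` digit layer of the coefficients costs `κ ^ (N + 1)`; the remaining digits cost
-- `sumConst` again, scaled by `κ / N < 1`.
noncomputable def sumBase : ℕ := ⌊B.κ⌋₊ + 1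

noncomputable def sumConst : ℝ := B.κ ^ (B.sumBase + 1) / (1 - B.κ / B.sumBase)

theorem κ_lt_sumBase : B.κ < B.sumBase := by
  simpa [sumBase] using Nat.lt_floor_add_one B.κ

theorem sumBase_pos : (0 : ℝ) < B.sumBase := by
  linarith [B.κ_lt_sumBase, B.one_le_κ]

theorem κ_div_sumBase_lt_one : B.κ / B.sumBase < 1 :=
  (div_lt_one B.sumBase_pos).2 B.κ_lt_sumBase

theorem sumConst_nonneg : 0 ≤ B.sumConst :=
  div_nonneg (pow_nonneg (by linarith [B.one_le_κ]) _) (by linarith [B.κ_div_sumBase_lt_one])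

theorem sumConst_eq : B.κ ^ (B.sumBase + 1) + B.κ / B.sumBase * B.sumConst = B.sumConst := by
  have h : 1 - B.κ / B.sumBase ≠ 0 := by linarith [B.κ_div_sumBase_lt_one]
  rw [sumConst]; field_simp; ring

theorem q_sum_smul_le_add_pow {ι : Type*} {D : Finset ι} {σ : ι → X} {P : ℝ}
    (hP : ∀ A ⊆ D, B.q (∑ i ∈ A, σ i) ≤ P) (n : ℕ) {r : ι → ℝ}
    (hr : ∀ i ∈ D, r i ∈ Set.Icc 0 1) :
    B.q (∑ i ∈ D, r i • σ i) ≤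
      (B.sumConst + (B.κ / B.sumBase) ^ n * (B.κ ^ #D * #D)) * P := by
  have hP0 : 0 ≤ P := by simpa [B.q_zero] using hP ∅ (empty_subset D)
  induction n generalizing r with
  | zero =>
    have hterm : ∀ i ∈ D, B.q (r i • σ i) ≤ P := fun i hi => by
      rw [B.q_smul, abs_of_nonneg (hr i hi).1]
      exact (mul_le_of_le_one_left (B.q_nonneg _) (hr i hi).2).trans
        (by simpa using hP {i} (singleton_subset_iff.2 hi))
    calc B.q (∑ i ∈ D, r i • σ i) ≤ B.κ ^ #D * (#D * P) := B.q_sum_le D _ hterm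
      _ ≤ _ := by nlinarith [mul_nonneg B.sumConst_nonneg hP0]
  | succ n ih =>
    set N := B.sumBase
    have hN : (0 : ℝ) < N := B.sumBase_pos
    set j : ι → ℕ := fun i => ⌊N * r i⌋₊
    have hj : ∀ i ∈ D, j i ≤ N := fun i hi =>
      Nat.floor_le_of_le (mul_le_of_le_one_right hN.le (hr i hi).2)
    have hrest : ∀ i ∈ D, N * r i - j i ∈ Set.Icc 0 1 := fun i hi =>
      ⟨sub_nonneg.2 (Nat.floor_le (mul_nonneg hN.le (hr i hi).1)),
        by linarith [Nat.lt_floor_add_one (N * r i)]⟩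
    set low := ∑ i ∈ D, (j i : ℝ) • σ i
    set high := ∑ i ∈ D, (N * r i - j i) • σ i
    have hsplit : ∑ i ∈ D, r i • σ i = (N : ℝ)⁻¹ • (low + high) := by
      rw [← sum_add_distrib, smul_sum]
      refine sum_congr rfl fun i _ => ?_
      rw [← add_smul, smul_smul]
      congr 1
      field_simp
      ring
    have hlayers : B.q low ≤ B.κ ^ N * (N * P) := by
      simp_rw [low, Nat.cast_smul_eq_nsmul, Finset.sum_nsmul_eq_sum_range_sum_filter D j hj]
      simpa using B.q_sum_le (range N) _ fun d _ => hP _ (filter_subset _ _)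
    calc B.q (∑ i ∈ D, r i • σ i)
        = (N : ℝ)⁻¹ * B.q (low + high) := by
          rw [hsplit, B.q_smul, abs_of_pos (inv_pos.2 hN)]
      _ ≤ (N : ℝ)⁻¹ * (B.κ * (B.κ ^ N * (N * P) +
            (B.sumConst + (B.κ / N) ^ n * (B.κ ^ #D * #D)) * P)) := by
          have hκ : 0 ≤ B.κ := by linarith [B.one_le_κ]
          gcongr
          exact (B.q_add _ _).trans (mul_le_mul_of_nonneg_left (add_le_add hlayers (ih hrest)) hκ)
      _ = (B.κ ^ (N + 1) + B.κ / N * B.sumConst +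
            (B.κ / N) ^ (n + 1) * (B.κ ^ #D * #D)) * P := by
          rw [div_pow, div_pow]
          field_simp
          ring
      _ = _ := by rw [B.sumConst_eq]

theorem q_sum_smul_le {ι : Type*} {D : Finset ι} {σ : ι → X} {P : ℝ}
    (hP : ∀ A ⊆ D, B.q (∑ i ∈ A, σ i) ≤ P) {r : ι → ℝ}
    (hr : ∀ i ∈ D, r i ∈ Set.Icc 0 1) :
    B.q (∑ i ∈ D, r i • σ i) ≤ B.sumConst * P := by
  have hlim : Tendsto (fun n => (B.sumConst + (B.κ / B.sumBase) ^ n * (B.κ ^ #D * #D)) * P)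
      atTop (𝓝 (B.sumConst * P)) := by
    have h0 : 0 ≤ B.κ / B.sumBase := div_nonneg (by linarith [B.one_le_κ]) B.sumBase_pos.le
    simpa using (((tendsto_pow_atTop_nhds_zero_of_lt_one h0 B.κ_div_sumBase_lt_one).mul_const
      _).const_add _).mul_const P
  exact ge_of_tendsto' hlim fun n => B.q_sum_smul_le_add_pow hP n hr

theorem q_sum_smul_le_of_le {ι : Type*} {D : Finset ι} {σ : ι → X} {P : ℝ}
    (hP : ∀ A ⊆ D, B.q (∑ i ∈ A, σ i) ≤ P) {ρ : ℝ} (hρ : 0 < ρ) {r : ι → ℝ}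
    (hr : ∀ i ∈ D, r i ∈ Set.Icc 0 ρ) :
    B.q (∑ i ∈ D, r i • σ i) ≤ B.sumConst * (ρ * P) := by
  have hscale : ∑ i ∈ D, r i • σ i = ρ • ∑ i ∈ D, (ρ⁻¹ * r i) • σ i := by
    rw [smul_sum]
    refine sum_congr rfl fun i _ => ?_
    rw [smul_smul, ← mul_assoc, mul_inv_cancel₀ hρ.ne', one_mul]
  have hr' : ∀ i ∈ D, ρ⁻¹ * r i ∈ Set.Icc 0 1 := fun i hi =>
    ⟨mul_nonneg (inv_nonneg.2 hρ.le) (hr i hi).1,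
      (inv_mul_le_one₀ hρ).2 (hr i hi).2⟩
  rw [hscale, B.q_smul, abs_of_pos hρ, mul_left_comm]
  exact mul_le_mul_of_nonneg_left (B.q_sum_smul_le hP hr') hρ.le

noncomputable def signVec (f : X) (A : Finset ℕ) : X := ∑ n ∈ A, Real.sign (B.c n f) • B.e n

theorem c_sum_smul (n : ℕ) (s : Finset ℕ) (w : ℕ → ℝ) :
    B.c n (∑ m ∈ s, w m • B.e m) = if n ∈ s then w n else 0 := by
  simp [map_sum, B.biorth]

theorem c_signVec (n : ℕ) (f : X) (A : Finset ℕ) :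
    B.c n (B.signVec f A) = if n ∈ A then Real.sign (B.c n f) else 0 :=
  B.c_sum_smul n A _

theorem mul_q_signVec_le_q_R {f : X} {A : Finset ℕ} {m : ℝ} (hm : 0 ≤ m)
    (h : ∀ n ∈ A, m ≤ |B.c n f|) : m * B.q (B.signVec f A) ≤ B.q (B.R A f) := by
  rw [R]
  split_ifs with hA
  · have hinf : m ≤ A.inf' hA fun n => |B.c n f| := le_inf' hA _ h
    rw [B.q_smul, abs_of_nonneg (hm.trans hinf)]
    exact mul_le_mul_of_nonneg_right hinf (B.q_nonneg _)
  · simp [Finset.not_nonempty_iff_eq_empty.1 hA, signVec, B.q_zero]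

def SignVecBounded (s K : ℝ) : Prop :=
  ∀ f, B.inQ f → ∀ A : Finset ℕ, (∀ n ∈ A, s ≤ |B.c n f|) →
    B.q (B.signVec f A) ≤ K * B.q f

theorem signVecBounded_of_truncation {C b : ℝ}
    (hT : ∀ f A, B.greedySet f A → B.q (B.R A f) ≤ C * B.q f) (hC : 0 ≤ C)
    (hb0 : 0 < b) (hb1 : b ≤ 1) (hCb : C * B.κ * (1 - b) ≤ 1 / 2) :
    B.SignVecBounded b (2 * C * B.κ) := by
  intro f hf A hA
  set u := B.signVec f A
  set g := f + (1 - b) • u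
  have hne : ∀ n ∈ A, B.c n f ≠ 0 := fun n hn h => by
    have := hA n hn; rw [h, abs_zero] at this; linarith
  have hcg_mem : ∀ n ∈ A, B.c n g = (|B.c n f| + (1 - b)) * Real.sign (B.c n f) := by
    intro n hn
    simp only [g, u, map_add, map_smul, B.c_signVec, if_pos hn, smul_eq_mul]
    rw [add_mul, Real.abs_mul_sign]
  have hcg_not : ∀ k ∉ A, B.c k g = B.c k f := by
    intro k hk
    simp [g, u, B.c_signVec, hk]
  have habs : ∀ n ∈ A, |B.c n g| = |B.c n f| + (1 - b) := by
    intro n hn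
    rw [hcg_mem n hn, abs_mul, Real.abs_sign_of_ne_zero (hne n hn), mul_one,
      abs_of_nonneg (by linarith [abs_nonneg (B.c n f)])]
  have hsign : B.signVec g A = u := sum_congr rfl fun n hn => by
    rw [hcg_mem n hn, Real.sign_mul_of_pos_s4 (by linarith [hA n hn]), Real.sign_sign]
  have hgreedy : B.greedySet g A := fun n hn k hk => by
    rw [hcg_not k hk, habs n hn]; linarith [hf k, hA n hn]
  have hqu : B.q u ≤ C * (B.κ * (B.q f + (1 - b) * B.q u)) :=
    calc B.q u = 1 * B.q (B.signVec g A) := by rw [hsign, one_mul]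
      _ ≤ B.q (B.R A g) :=
          B.mul_q_signVec_le_q_R zero_le_one fun n hn => by rw [habs n hn]; linarith [hA n hn]
      _ ≤ C * B.q g := hT g A hgreedy
      _ ≤ C * (B.κ * (B.q f + (1 - b) * B.q u)) := by
          gcongr
          simpa [B.q_smul, abs_of_nonneg (sub_nonneg.2 hb1)] using B.q_add f ((1 - b) • u)
  nlinarith [mul_le_mul_of_nonneg_right hCb (B.q_nonneg u)]

noncomputable def clip (s : ℝ) (D : Finset ℕ) (f : X) : X :=
  f - ∑ n ∈ D with s ≤ |B.c n f|, ((|B.c n f| - s) * Real.sign (B.c n f)) • B.e n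

theorem c_clip (s : ℝ) (D : Finset ℕ) (f : X) (n : ℕ) :
    B.c n (B.clip s D f) =
      if n ∈ D ∧ s ≤ |B.c n f| then s * Real.sign (B.c n f) else B.c n f := by
  rw [clip, map_sub, B.c_sum_smul]
  simp only [Finset.mem_filter]
  split_ifs
  · nth_rewrite 1 [← Real.abs_mul_sign (B.c n f)]; ring
  · simp

noncomputable def clipConst (s K : ℝ) : ℝ := B.κ * (1 + B.sumConst * ((1 - s) * K))

theorem clipConst_nonneg {s K : ℝ} (hs : s ≤ 1) (hK : 0 ≤ K) : 0 ≤ B.clipConst s K := by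
  have := B.sumConst_nonneg
  have := B.one_le_κ
  have : 0 ≤ 1 - s := by linarith
  unfold clipConst
  positivity

theorem q_clip_le {s K : ℝ} (hs1 : s < 1) (htop : B.SignVecBounded s K) {f : X}
    (hf : B.inQ f) (D : Finset ℕ) :
    B.q (B.clip s D f) ≤ B.clipConst s K * B.q f := by
  have hcut : B.q (∑ n ∈ D with s ≤ |B.c n f|,
      ((|B.c n f| - s) * Real.sign (B.c n f)) • B.e n) ≤
        B.sumConst * ((1 - s) * (K * B.q f)) := by
    simp_rw [← smul_smul]
    exact B.q_sum_smul_le_of_le (σ := fun n => Real.sign (B.c n f) • B.e n)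
      (fun A hA => htop f hf A fun n hn => (Finset.mem_filter.1 (hA hn)).2) (sub_pos.2 hs1)
      fun n hn => ⟨sub_nonneg.2 (Finset.mem_filter.1 hn).2, by linarith [hf n]⟩
  have hκ : 0 ≤ B.κ := by linarith [B.one_le_κ]
  calc B.q (B.clip s D f) ≤ B.κ * (B.q f + B.sumConst * ((1 - s) * (K * B.q f))) :=
        (B.q_sub_le _ _).trans (by gcongr)
    _ = _ := by rw [clipConst]; ring

theorem exists_rescaled_of_thrSet {s K b : ℝ} (hs0 : 0 < s) (hs1 : s < 1)
    (htop : B.SignVecBounded s K) (hb : b ≤ 1) {f : X} (hf : B.inQ f) {D : Finset ℕ}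
    (hD : B.thrSet (s * b) f D) :
    ∃ F, B.inQ F ∧ B.thrSet b F D ∧
      (∀ n ∈ D, Real.sign (B.c n F) = Real.sign (B.c n f)) ∧
      B.q F ≤ B.clipConst s K / s * B.q f := by
  have hc : ∀ n, B.c n (s⁻¹ • B.clip s D f) =
      if n ∈ D ∧ s ≤ |B.c n f| then Real.sign (B.c n f) else s⁻¹ * B.c n f := by
    intro n
    rw [map_smul, B.c_clip, smul_eq_mul]
    split_ifs
    · field_simp
    · rfl
  have hsmall : ∀ n, ¬(n ∈ D ∧ s ≤ |B.c n f|) → |B.c n f| < s := by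
    intro n hn
    by_cases hnD : n ∈ D
    · exact lt_of_not_ge fun h => hn ⟨hnD, h⟩
    · exact (lt_of_not_ge ((hD n).not.1 hnD)).trans_le (mul_le_of_le_one_right hs0.le hb)
  have habs : ∀ n, |s⁻¹ * B.c n f| = s⁻¹ * |B.c n f| := fun n => by
    rw [abs_mul, abs_inv, abs_of_pos hs0]
  refine ⟨s⁻¹ • B.clip s D f, fun n => ?_, fun n => ?_, fun n _ => ?_, ?_⟩
  · rw [hc]
    split_ifs with h
    · exact Real.abs_sign_le_one _
    · rw [habs, inv_mul_le_one₀ hs0]; exact (hsmall n h).le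
  · rw [hc]
    split_ifs with h
    · have hne : B.c n f ≠ 0 := fun h0 => by have := h.2; rw [h0, abs_zero] at this; linarith
      rw [Real.abs_sign_of_ne_zero hne]
      exact iff_of_true h.1 hb
    · rw [hD n, habs, le_inv_mul_iff₀ hs0]
  · rw [hc]
    split_ifs
    · exact Real.sign_sign _
    · exact Real.sign_mul_of_pos_s4 (inv_pos.2 hs0) _
  · rw [B.q_smul, abs_inv, abs_of_pos hs0]
    calc s⁻¹ * B.q (B.clip s D f) ≤ s⁻¹ * (B.clipConst s K * B.q f) := by
          gcongr; exact B.q_clip_le hs1 htop hf D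
      _ = _ := by ring

theorem exists_rescaled_of_thrSet_pow {s K b : ℝ} (hs0 : 0 < s) (hs1 : s < 1) (hK : 0 ≤ K)
    (htop : B.SignVecBounded s K) (hb : b ∈ Set.Icc 0 1) (k : ℕ) {f : X} (hf : B.inQ f)
    {D : Finset ℕ} (hD : B.thrSet (s ^ k * b) f D) :
    ∃ F, B.inQ F ∧ B.thrSet b F D ∧
      (∀ n ∈ D, Real.sign (B.c n F) = Real.sign (B.c n f)) ∧
      B.q F ≤ (B.clipConst s K / s) ^ k * B.q f := by
  set Γ := B.clipConst s K / s
  have hΓ : 0 ≤ Γ := div_nonneg (B.clipConst_nonneg hs1.le hK) hs0.le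
  induction k generalizing f with
  | zero => exact ⟨f, hf, by simpa using hD, fun _ _ => rfl, by simp⟩
  | succ k ih =>
    rw [pow_succ', mul_assoc] at hD
    have hbk : s ^ k * b ≤ 1 := mul_le_one₀ (pow_le_one₀ hs0.le hs1.le) hb.1 hb.2
    obtain ⟨F₁, hF₁, hD₁, hsign₁, hq₁⟩ :=
      B.exists_rescaled_of_thrSet hs0 hs1 htop hbk hf hD
    obtain ⟨F, hF, hDF, hsign, hq⟩ := ih hF₁ hD₁
    refine ⟨F, hF, hDF, fun n hn => (hsign n hn).trans (hsign₁ n hn), ?_⟩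
    calc B.q F ≤ Γ ^ k * B.q F₁ := hq
      _ ≤ Γ ^ k * (Γ * B.q f) := by gcongr
      _ = Γ ^ (k + 1) * B.q f := by ring

theorem S_eq_sum_abs_smul (A : Finset ℕ) (f : X) :
    B.S A f = ∑ n ∈ A, |B.c n f| • (Real.sign (B.c n f) • B.e n) :=
  sum_congr rfl fun n _ => by rw [smul_smul, Real.abs_mul_sign]

theorem nearlyUnconditional_of_signVecBounded {s K : ℝ} (hs0 : 0 < s) (hs1 : s < 1)
    (hK : 0 ≤ K) (htop : B.SignVecBounded s K) : B.NearlyUnconditional := by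
  intro a ⟨ha0, ha1⟩
  obtain ⟨k, hk1, hk⟩ := exists_nat_pow_near_of_lt_one ha0 ha1.le hs0 hs1
  set Γ := B.clipConst s K / s
  have hspos : 0 < s ^ k := pow_pos hs0 k
  set b := a / s ^ k
  have hab : s ^ k * b = a := mul_div_cancel₀ a hspos.ne'
  have hsb : s ≤ b := (le_div_iff₀ hspos).2 (by rw [← pow_succ']; exact hk1.le)
  have hb1 : b ≤ 1 := (div_le_one hspos).2 hk
  refine ⟨B.sumConst * (K * Γ ^ k), fun f hf Aa A hAa hA => ?_⟩
  obtain ⟨F, hF, hAaF, hsign, hqF⟩ := B.exists_rescaled_of_thrSet_pow hs0 hs1 hK htop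
    ⟨hs0.le.trans hsb, hb1⟩ k hf (hab ▸ hAa)
  have hpieces : ∀ A' ⊆ A,
      B.q (∑ n ∈ A', Real.sign (B.c n f) • B.e n) ≤ K * (Γ ^ k * B.q f) := fun A' hA' =>
    calc B.q (∑ n ∈ A', Real.sign (B.c n f) • B.e n) = B.q (B.signVec F A') :=
          congrArg B.q (sum_congr rfl fun n hn => by rw [hsign n (hA (hA' hn))])
      _ ≤ K * B.q F := htop F hF A' fun n hn => hsb.trans ((hAaF n).1 (hA (hA' hn)))
      _ ≤ K * (Γ ^ k * B.q f) := by gcongr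
  rw [B.S_eq_sum_abs_smul]
  exact (B.q_sum_smul_le hpieces fun n _ => ⟨abs_nonneg _, hf n⟩).trans_eq (by ring)

end QBasis

/-- every truncation quasi-greedy basis of a quasi-Banach space is
nearly unconditional. -/
theorem stmt4 {X : Type*} [AddCommGroup X] [Module ℝ X] (B : QBasis X)
    (htqg : B.TruncationQG) : B.NearlyUnconditional := by
  obtain ⟨C₀, hC₀⟩ := htqg
  set C := max C₀ 1
  have hT : ∀ f A, B.greedySet f A → B.q (B.R A f) ≤ C * B.q f := fun f A hA =>
    (hC₀ f A hA).trans (mul_le_mul_of_nonneg_right (le_max_left _ _) (B.q_nonneg f))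
  have hC : 0 < C := lt_max_of_lt_right one_pos
  have hκ : 0 < B.κ := by linarith [B.one_le_κ]
  have hK : 2 ≤ 2 * C * B.κ := by
    nlinarith [one_le_mul_of_one_le_of_one_le (le_max_right C₀ 1) B.one_le_κ]
  have hε : 0 < (2 * C * B.κ)⁻¹ := inv_pos.2 (by linarith)
  have hε2 : (2 * C * B.κ)⁻¹ ≤ 2⁻¹ := inv_anti₀ two_pos hK
  have hCs : C * B.κ * (1 - (1 - (2 * C * B.κ)⁻¹)) ≤ 1 / 2 :=
    le_of_eq (by field_simp; ring)
  refine B.nearlyUnconditional_of_signVecBounded (s := 1 - (2 * C * B.κ)⁻¹) (K := 2 * C * B.κ)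
    (by linarith) (by linarith) (by linarith) ?_
  exact B.signVecBounded_of_truncation hT hC.le (by linarith) (by linarith) hCs
end

section
/- Let $\mathcal{X}=(x_n)$ be a basis of a Banach space $\mathbb{X}$ whose unconditionality constants satisfy $\mathbf{k}_m\lesssim m^t$ for some $0<t<1/2$, and suppose the dual space $\mathbb{X}^*$ is a GT space. Then $\mathcal{X}$ is $q$-Hilbertian for every $q<1/t$, i.e., there is a constant $C_q$ such that $\|\sum_n a_n x_n\|\le C_q(\sum_n|a_n|^q)^{1/q}$ for all finitely supported scalar sequences $(a_n)$. -/
open Finset Set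
open scoped ENNReal NNReal

noncomputable section

instance : Fact ((1 : ℝ≥0∞) ≤ 2) := ⟨one_le_two⟩

/-- A (Schauder-type) basis of a Banach space: a norm-bounded biorthogonal system
`(e, c)` whose linear span is dense. -/
structure BBasis (X : Type*) [NormedAddCommGroup X] [NormedSpace ℝ X] where
  e : ℕ → X
  c : ℕ → X →L[ℝ] ℝ
  biorth : ∀ m n, c m (e n) = if m = n then (1 : ℝ) else 0
  e_bdd : ∃ M, ∀ n, ‖e n‖ ≤ M
  c_bdd : ∃ M, ∀ n, ‖c n‖ ≤ M
  dense_span : Dense (Submodule.span ℝ (Set.range e) : Set X)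

namespace BBasis

variable {X : Type*} [NormedAddCommGroup X] [NormedSpace ℝ X] (B : BBasis X)

/-- Coordinate projection on a finite set `A`. -/
def S (A : Finset ℕ) (f : X) : X := ∑ n ∈ A, B.c n f • B.e n

/-- The set `𝒬` of vectors with coefficients in the unit ball of `ℓ∞`. -/
def inQ (f : X) : Prop := ∀ n, |B.c n f| ≤ 1

/-- `A` is the set `A(a,f) = {n : |c n f| ≥ a}`. -/
def thrSet (a : ℝ) (f : X) (A : Finset ℕ) : Prop := ∀ n, n ∈ A ↔ a ≤ |B.c n f|

/-- `A` is a greedy set of `f`. -/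
def greedySet (f : X) (A : Finset ℕ) : Prop :=
  ∀ n ∈ A, ∀ k, k ∉ A → |B.c k f| ≤ |B.c n f|

/-- The restricted truncation operator associated with a finite set `A`. -/
def R (A : Finset ℕ) (f : X) : X :=
  if h : A.Nonempty then
    (A.inf' h fun n => |B.c n f|) • ∑ n ∈ A, Real.sign (B.c n f) • B.e n
  else 0

/-- The basis is truncation quasi-greedy. -/
def TruncationQG : Prop :=
  ∃ C : ℝ, ∀ f (A : Finset ℕ), B.greedySet f A → ‖B.R A f‖ ≤ C * ‖f‖

/-- The basis is equivalent to the unit vector basis of `c₀`. -/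
def EquivC0 : Prop :=
  ∃ c C : ℝ, 0 < c ∧ ∀ (A : Finset ℕ) (hA : A.Nonempty) (a : ℕ → ℝ),
    c * (A.sup' hA fun n => |a n|) ≤ ‖∑ n ∈ A, a n • B.e n‖ ∧
    ‖∑ n ∈ A, a n • B.e n‖ ≤ C * (A.sup' hA fun n => |a n|)

end BBasis

/-- A Banach space `Y` is a GT space: every bounded operator `T : Y → ℓ₂` is
absolutely summing. -/
def IsGTSpace (Y : Type*) [NormedAddCommGroup Y] [NormedSpace ℝ Y] : Prop :=
  ∀ T : Y →L[ℝ] lp (fun _ : ℕ => ℝ) 2, ∃ C : ℝ,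
    ∀ (A : Finset ℕ) (g : ℕ → Y) (M : ℝ),
      (∀ ε : ℕ → ℝ, (∀ k ∈ A, |ε k| = 1) → ‖∑ k ∈ A, ε k • g k‖ ≤ M) →
      ∑ k ∈ A, ‖T (g k)‖ ≤ C * M

/-!
Write `P(β)` (`BBasis.HasDualSumGrowth`) for the dual growth condition
`∑_{n∈A} |g (e n)| ≤ C |A|^β ‖g‖`. Testing the GT property of `X*` on the operator
`g ↦ (g (e n))_{n∈A}` and the functionals `x (e k) • c k`, whose sign sums are bounded by
`2 𝐤_{|A|} ≲ |A|^t`, gives `∑_{n∈A} |x (e n)| ≲ W |A|^t ‖x‖` whenever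
`(∑_{n∈A} g (e n)²)^{1/2} ≤ W ‖g‖` for all `g`. As `P(β)` bounds the `k`-th largest coefficient
by `C k^{β-1}`, it provides such a `W ≲ |A|^{σ/2}` for every `σ ≥ 0` with `σ > 2β - 1`, hence
`P(σ/2 + t)`. Starting from the trivial `P(1)`, finitely many rounds reach `P(t)`. Then the
coefficients of every functional lie in `ℓ_r` for `r (1 - t) > 1`, and Hölder's inequality with
the conjugate exponent `q < 1/t` gives the upper `ℓ_q` estimate.
-/

open scoped lp

lemma sum_Icc_rpow_le_tsum_mul_rpow {s σ : ℝ} (hσ : 0 ≤ σ) (hsσ : s - σ < -1) (m : ℕ) :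
    ∑ k ∈ Icc 1 m, (k : ℝ) ^ s ≤ (∑' k : ℕ, (k : ℝ) ^ (s - σ)) * (m : ℝ) ^ σ := by
  calc ∑ k ∈ Icc 1 m, (k : ℝ) ^ s = ∑ k ∈ Icc 1 m, (k : ℝ) ^ (s - σ) * (k : ℝ) ^ σ := by
        refine sum_congr rfl fun k hk => ?_
        have hk : (0 : ℝ) < k := by exact_mod_cast (mem_Icc.1 hk).1
        rw [← Real.rpow_add hk, sub_add_cancel]
    _ ≤ ∑ k ∈ Icc 1 m, (k : ℝ) ^ (s - σ) * (m : ℝ) ^ σ := by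
        gcongr with k hk
        exact_mod_cast (mem_Icc.1 hk).2
    _ = (∑ k ∈ Icc 1 m, (k : ℝ) ^ (s - σ)) * (m : ℝ) ^ σ := (sum_mul ..).symm
    _ ≤ _ := by
        gcongr
        exact (Real.summable_nat_rpow.2 hsσ).sum_le_tsum _ fun _ _ => by positivity

lemma sum_rpow_le_of_sum_le {ι : Type*} [DecidableEq ι] {a : ι → ℝ} {C β r : ℝ}
    (ha : ∀ i, 0 ≤ a i) (hC : 0 ≤ C) (hr : 0 < r)
    (h : ∀ A : Finset ι, ∑ i ∈ A, a i ≤ C * (#A : ℝ) ^ β) (A : Finset ι) :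
    ∑ i ∈ A, a i ^ r ≤ C ^ r * ∑ k ∈ Icc 1 #A, (k : ℝ) ^ (r * (β - 1)) := by
  induction A using Finset.induction_on_min_value a with
  | empty => simp
  | insert i A hi hmin ih =>
    set m : ℝ := #A + 1
    have hm : 0 < m := by positivity
    have hcard : #(insert i A) = #A + 1 := card_insert_of_notMem hi
    -- the smallest term is at most the average
    have hai : a i ≤ C * m ^ (β - 1) := by
      have hsum : m * a i ≤ C * m ^ β := by
        calc m * a i = ∑ _j ∈ insert i A, a i := by simp [m, hcard]
          _ ≤ ∑ j ∈ insert i A, a j :=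
              sum_le_sum fun j hj => (mem_insert.1 hj).elim (fun h => h ▸ le_rfl) (hmin j)
          _ ≤ C * m ^ β := by simpa [m, hcard] using h (insert i A)
      rw [Real.rpow_sub_one hm.ne', mul_div_assoc', le_div_iff₀ hm]
      linarith
    have hair : a i ^ r ≤ C ^ r * m ^ (r * (β - 1)) := by
      calc a i ^ r ≤ (C * m ^ (β - 1)) ^ r := Real.rpow_le_rpow (ha i) hai hr.le
        _ = C ^ r * m ^ (r * (β - 1)) := by
          rw [Real.mul_rpow hC (by positivity), ← Real.rpow_mul hm.le, mul_comm (β - 1)]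
    rw [sum_insert hi, hcard, sum_Icc_succ_top (by omega), mul_add, add_comm]
    push_cast
    exact add_le_add ih hair

lemma rpow_sum_le_sum_rpow {ι : Type*} (s : Finset ι) {f : ι → ℝ} (hf : ∀ i, 0 ≤ f i) {q : ℝ}
    (hq0 : 0 < q) (hq1 : q ≤ 1) : (∑ i ∈ s, f i) ^ q ≤ ∑ i ∈ s, f i ^ q := by
  induction s using Finset.cons_induction with
  | empty => simp [Real.zero_rpow hq0.ne']
  | cons i s hi ih =>
    rw [sum_cons, sum_cons]
    calc (f i + ∑ j ∈ s, f j) ^ q ≤ f i ^ q + (∑ j ∈ s, f j) ^ q :=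
          Real.rpow_add_le_add_rpow (hf i) (sum_nonneg fun j _ => hf j) hq0.le hq1
      _ ≤ f i ^ q + ∑ j ∈ s, f j ^ q := by gcongr

section Hilbertian

variable {X : Type*} [NormedAddCommGroup X] [NormedSpace ℝ X]

def IsHilbertian (e : ℕ → X) (q : ℝ) : Prop :=
  ∃ C : ℝ, ∀ (A : Finset ℕ) (a : ℕ → ℝ),
    ‖∑ n ∈ A, a n • e n‖ ≤ C * (∑ n ∈ A, |a n| ^ q) ^ (1 / q)

lemma isHilbertian_of_bounded {e : ℕ → X} {M : ℝ} (he : ∀ n, ‖e n‖ ≤ M) {q : ℝ} (hq0 : 0 < q)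
    (hq1 : q ≤ 1) : IsHilbertian e q := by
  refine ⟨max M 0, fun A a => ?_⟩
  calc ‖∑ n ∈ A, a n • e n‖ ≤ ∑ n ∈ A, max M 0 * |a n| :=
        (norm_sum_le _ _).trans <| sum_le_sum fun n _ => by
          rw [norm_smul, Real.norm_eq_abs, mul_comm]
          gcongr
          exact (he n).trans (le_max_left _ _)
    _ = max M 0 * ((∑ n ∈ A, |a n|) ^ q) ^ (1 / q) := by
        rw [← mul_sum, one_div, Real.rpow_rpow_inv (sum_nonneg fun _ _ => abs_nonneg _) hq0.ne']
    _ ≤ max M 0 * (∑ n ∈ A, |a n| ^ q) ^ (1 / q) := by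
        gcongr
        exact rpow_sum_le_sum_rpow A (fun _ => abs_nonneg _) hq0 hq1

lemma isHilbertian_of_sum_rpow_apply_le {e : ℕ → X} {q r D : ℝ} (hqr : q.HolderConjugate r)
    (hD : 0 ≤ D)
    (h : ∀ (g : X →L[ℝ] ℝ) (A : Finset ℕ), ∑ n ∈ A, |g (e n)| ^ r ≤ D * ‖g‖ ^ r) :
    IsHilbertian e q := by
  refine ⟨D ^ (1 / r), fun A a => ?_⟩
  obtain ⟨g, hg, hgf⟩ := exists_dual_vector'' ℝ (∑ n ∈ A, a n • e n)
  have hDg : ∑ n ∈ A, |g (e n)| ^ r ≤ D := by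
    calc ∑ n ∈ A, |g (e n)| ^ r ≤ D * ‖g‖ ^ r := h g A
      _ ≤ D * 1 ^ r := by gcongr; exact hqr.symm.pos.le
      _ = D := by rw [Real.one_rpow, mul_one]
  calc ‖∑ n ∈ A, a n • e n‖ = ∑ n ∈ A, a n * g (e n) := by simpa using hgf.symm
    _ ≤ ∑ n ∈ A, |a n| * |g (e n)| := sum_le_sum fun n _ => (le_abs_self _).trans (abs_mul _ _).le
    _ ≤ (∑ n ∈ A, |a n| ^ q) ^ (1 / q) * (∑ n ∈ A, |g (e n)| ^ r) ^ (1 / r) :=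
        Real.inner_le_Lp_mul_Lq_of_nonneg A hqr (fun _ _ => abs_nonneg _)
          fun _ _ => abs_nonneg _
    _ ≤ (∑ n ∈ A, |a n| ^ q) ^ (1 / q) * D ^ (1 / r) := by
        gcongr
        exact one_div_nonneg.2 hqr.symm.pos.le
    _ = D ^ (1 / r) * (∑ n ∈ A, |a n| ^ q) ^ (1 / q) := mul_comm _ _

end Hilbertian

section GT

variable {Y : Type*} [NormedAddCommGroup Y] [NormedSpace ℝ Y]

variable (Y) in
def SummingTestData : Type _ :=
  {p : Finset ℕ × (ℕ → Y) × (ℕ → ℓ²(ℕ, ℝ)) //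
    (∀ ε : ℕ → ℝ, (∀ k ∈ p.1, |ε k| = 1) → ‖∑ k ∈ p.1, ε k • p.2.1 k‖ ≤ 1) ∧
      ∀ k, ‖p.2.2 k‖ ≤ 1}

def SummingTestData.pairing (p : SummingTestData Y) : (Y →L[ℝ] ℓ²(ℕ, ℝ)) →L[ℝ] ℝ :=
  ∑ k ∈ p.1.1, (innerSL ℝ (p.1.2.2 k)).comp (ContinuousLinearMap.apply ℝ _ (p.1.2.1 k))

lemma SummingTestData.pairing_apply (p : SummingTestData Y) (T : Y →L[ℝ] ℓ²(ℕ, ℝ)) :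
    p.pairing T = ∑ k ∈ p.1.1, inner ℝ (p.1.2.2 k) (T (p.1.2.1 k)) := by
  simp [pairing]

lemma inner_inv_norm_smul_self {E : Type*} [NormedAddCommGroup E] [InnerProductSpace ℝ E]
    (v : E) : inner ℝ (‖v‖⁻¹ • v) v = ‖v‖ := by
  rcases eq_or_ne v 0 with rfl | hv
  · simp
  · rw [real_inner_smul_left, real_inner_self_eq_norm_mul_norm,
      inv_mul_cancel_left₀ (norm_ne_zero_iff.2 hv)]

-- The GT property says exactly that the functionals `SummingTestData.pairing` are pointwise
-- bounded, so Banach–Steinhaus bounds them uniformly.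
lemma IsGTSpace.exists_uniform (hGT : IsGTSpace Y) :
    ∃ K, ∀ (T : Y →L[ℝ] ℓ²(ℕ, ℝ)) (A : Finset ℕ) (g : ℕ → Y) (M : ℝ), 0 < M →
      (∀ ε : ℕ → ℝ, (∀ k ∈ A, |ε k| = 1) → ‖∑ k ∈ A, ε k • g k‖ ≤ M) →
      ∑ k ∈ A, ‖T (g k)‖ ≤ K * ‖T‖ * M := by
  obtain ⟨K, hK⟩ := banach_steinhaus (g := SummingTestData.pairing (Y := Y)) fun T => by
    obtain ⟨C, hC⟩ := hGT T
    refine ⟨C, fun p => ?_⟩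
    calc ‖p.pairing T‖ ≤ ∑ k ∈ p.1.1, ‖T (p.1.2.1 k)‖ := by
          rw [p.pairing_apply]
          refine (norm_sum_le _ _).trans (sum_le_sum fun k _ => ?_)
          calc ‖inner ℝ (p.1.2.2 k) (T (p.1.2.1 k))‖ ≤ ‖p.1.2.2 k‖ * ‖T (p.1.2.1 k)‖ :=
                norm_inner_le_norm _ _
            _ ≤ ‖T (p.1.2.1 k)‖ := mul_le_of_le_one_left (norm_nonneg _) (p.2.2 k)
      _ ≤ C := by simpa using hC p.1.1 p.1.2.1 1 p.2.1
  refine ⟨K, fun T A g M hM hg => ?_⟩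
  let p : SummingTestData Y := ⟨(A, fun k => M⁻¹ • g k, fun k => ‖T (g k)‖⁻¹ • T (g k)),
    fun ε hε => by
      simp_rw [smul_comm (ε _), ← smul_sum, norm_smul, norm_inv, Real.norm_of_nonneg hM.le]
      exact inv_mul_le_one_of_le₀ (hg ε hε) hM.le,
    fun k => by
      rw [norm_smul, norm_inv, norm_norm]
      exact inv_mul_le_one_of_le₀ le_rfl (norm_nonneg _)⟩
  have hp : p.pairing T = M⁻¹ * ∑ k ∈ A, ‖T (g k)‖ := by
    simp only [p.pairing_apply, p, map_smul, real_inner_smul_right, inner_inv_norm_smul_self,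
      mul_sum]
  calc ∑ k ∈ A, ‖T (g k)‖ = p.pairing T * M := by rw [hp]; field_simp
    _ ≤ ‖p.pairing T‖ * M := by gcongr; exact Real.le_norm_self _
    _ ≤ K * ‖T‖ * M := by gcongr; exact (p.pairing.le_opNorm T).trans (by gcongr; exact hK p)

end GT

namespace BBasis

variable {X : Type*} [NormedAddCommGroup X] [NormedSpace ℝ X] (B : BBasis X)

def coeffMap (A : Finset ℕ) : (X →L[ℝ] ℝ) →L[ℝ] ℓ²(ℕ, ℝ) :=
  ∑ n ∈ A, (ContinuousLinearMap.apply ℝ ℝ (B.e n)).smulRight (lp.single 2 n 1)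

lemma coeffMap_apply (A : Finset ℕ) (g : X →L[ℝ] ℝ) :
    B.coeffMap A g = ∑ n ∈ A, lp.single 2 n (g (B.e n)) := by
  simp [coeffMap, ← lp.single_smul]

lemma norm_coeffMap_apply_sq (A : Finset ℕ) (g : X →L[ℝ] ℝ) :
    ‖B.coeffMap A g‖ ^ 2 = ∑ n ∈ A, g (B.e n) ^ 2 := by
  have h := lp.norm_sum_single (p := 2) (by norm_num) (fun n => g (B.e n)) A
  simpa [coeffMap_apply] using h

lemma coeffMap_apply_c {A : Finset ℕ} {k : ℕ} (hk : k ∈ A) :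
    B.coeffMap A (B.c k) = lp.single 2 k 1 := by
  rw [coeffMap_apply, sum_eq_single_of_mem k hk fun n _ hn => by simp [B.biorth, hn.symm]]
  simp [B.biorth]

lemma one_le_of_norm_S_le {t Ct : ℝ}
    (hk : ∀ (A : Finset ℕ) (f : X), ‖B.S A f‖ ≤ Ct * (#A : ℝ) ^ t * ‖f‖) : 1 ≤ Ct := by
  have he : 0 < ‖B.e 0‖ := norm_pos_iff.2 fun h => by simpa [h] using B.biorth 0 0
  have h := hk {0} (B.e 0)
  simp only [S, sum_singleton, B.biorth, if_pos, one_smul, Finset.card_singleton, Nat.cast_one,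
    Real.one_rpow, mul_one] at h
  nlinarith

lemma norm_sum_sign_mul_smul_le {t Ct : ℝ} (ht : 0 ≤ t) (hCt : 0 ≤ Ct)
    (hk : ∀ (A : Finset ℕ) (f : X), ‖B.S A f‖ ≤ Ct * (#A : ℝ) ^ t * ‖f‖)
    (A : Finset ℕ) {ε : ℕ → ℝ} (hε : ∀ k ∈ A, |ε k| = 1) (f : X) :
    ‖∑ k ∈ A, (ε k * B.c k f) • B.e k‖ ≤ 2 * Ct * (#A : ℝ) ^ t * ‖f‖ := by
  classical
  set P := A.filter (fun k => 0 ≤ ε k)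
  set N := A.filter (fun k => ¬ 0 ≤ ε k)
  have hsplit : ∑ k ∈ A, (ε k * B.c k f) • B.e k = B.S P f - B.S N f := by
    rw [← sum_filter_add_sum_filter_not A (fun k => 0 ≤ ε k), sub_eq_add_neg, S, S,
      ← sum_neg_distrib]
    congr 1 <;> refine sum_congr rfl fun k hk => ?_ <;> rw [mem_filter] at hk <;>
      have h1 := hε k hk.1
    · rw [abs_of_nonneg hk.2] at h1
      rw [h1, one_mul]
    · rw [abs_of_neg (not_le.1 hk.2)] at h1
      rw [show ε k = -1 by linarith, neg_one_mul, neg_smul]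
  have hsub : ∀ Q ⊆ A, ‖B.S Q f‖ ≤ Ct * (#A : ℝ) ^ t * ‖f‖ := fun Q hQ =>
    (hk Q f).trans (by gcongr)
  calc ‖∑ k ∈ A, (ε k * B.c k f) • B.e k‖ ≤ ‖B.S P f‖ + ‖B.S N f‖ :=
        hsplit ▸ norm_sub_le _ _
    _ ≤ 2 * Ct * (#A : ℝ) ^ t * ‖f‖ := by
        linarith [hsub P (filter_subset _ _), hsub N (filter_subset _ _)]

lemma norm_sum_sign_smul_apply_e_smul_c_le {t Ct : ℝ} (ht : 0 ≤ t) (hCt : 0 ≤ Ct)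
    (hk : ∀ (A : Finset ℕ) (f : X), ‖B.S A f‖ ≤ Ct * (#A : ℝ) ^ t * ‖f‖)
    (A : Finset ℕ) {ε : ℕ → ℝ} (hε : ∀ k ∈ A, |ε k| = 1) (x : X →L[ℝ] ℝ) :
    ‖∑ k ∈ A, ε k • (x (B.e k) • B.c k)‖ ≤ 2 * Ct * (#A : ℝ) ^ t * ‖x‖ := by
  refine ContinuousLinearMap.opNorm_le_bound _ (by positivity) fun f => ?_
  have happly : (∑ k ∈ A, ε k • (x (B.e k) • B.c k)) f =
      x (∑ k ∈ A, (ε k * B.c k f) • B.e k) := by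
    simp only [_root_.sum_apply, smul_apply, map_sum, map_smul, smul_eq_mul]
    exact sum_congr rfl fun k _ => by ring
  rw [happly]
  calc ‖x (∑ k ∈ A, (ε k * B.c k f) • B.e k)‖ ≤ ‖x‖ * (2 * Ct * (#A : ℝ) ^ t * ‖f‖) :=
        x.le_opNorm_of_le (B.norm_sum_sign_mul_smul_le ht hCt hk A hε f)
    _ = 2 * Ct * (#A : ℝ) ^ t * ‖x‖ * ‖f‖ := by ring

def HasDualSumGrowth (β : ℝ) : Prop :=
  ∃ C, 0 ≤ C ∧ ∀ (g : X →L[ℝ] ℝ) (A : Finset ℕ),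
    ∑ n ∈ A, |g (B.e n)| ≤ C * (#A : ℝ) ^ β * ‖g‖

lemma hasDualSumGrowth_one : B.HasDualSumGrowth 1 := by
  obtain ⟨M, hM⟩ := B.e_bdd
  refine ⟨max M 0, le_max_right _ _, fun g A => ?_⟩
  calc ∑ n ∈ A, |g (B.e n)| ≤ ∑ _n ∈ A, ‖g‖ * max M 0 :=
        sum_le_sum fun n _ => g.le_opNorm_of_le ((hM n).trans (le_max_left _ _))
    _ = max M 0 * (#A : ℝ) ^ (1 : ℝ) * ‖g‖ := by simp; ring

variable {B} in
lemma HasDualSumGrowth.sum_rpow_le {β r σ : ℝ} (h : B.HasDualSumGrowth β) (hr : 0 < r)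
    (hσ : 0 ≤ σ) (hβσ : r * (β - 1) - σ < -1) :
    ∃ D, 0 ≤ D ∧ ∀ (g : X →L[ℝ] ℝ) (A : Finset ℕ),
      ∑ n ∈ A, |g (B.e n)| ^ r ≤ D * (#A : ℝ) ^ σ * ‖g‖ ^ r := by
  obtain ⟨C, hC, hsum⟩ := h
  set Z := ∑' k : ℕ, (k : ℝ) ^ (r * (β - 1) - σ)
  have hZ : 0 ≤ Z := tsum_nonneg fun _ => by positivity
  refine ⟨C ^ r * Z, by positivity, fun g A => ?_⟩
  calc ∑ n ∈ A, |g (B.e n)| ^ r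
      ≤ (C * ‖g‖) ^ r * ∑ k ∈ Icc 1 #A, (k : ℝ) ^ (r * (β - 1)) :=
        sum_rpow_le_of_sum_le (fun _ => abs_nonneg _) (by positivity) hr
          (fun A => (hsum g A).trans_eq (by ring)) A
    _ ≤ (C * ‖g‖) ^ r * (Z * (#A : ℝ) ^ σ) := by
        gcongr
        exact sum_Icc_rpow_le_tsum_mul_rpow hσ hβσ _
    _ = C ^ r * Z * (#A : ℝ) ^ σ * ‖g‖ ^ r := by
        rw [Real.mul_rpow hC (norm_nonneg _)]
        ring

lemma exists_sum_abs_apply_e_le {t Ct : ℝ} (ht : 0 ≤ t)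
    (hk : ∀ (A : Finset ℕ) (f : X), ‖B.S A f‖ ≤ Ct * (#A : ℝ) ^ t * ‖f‖)
    (hGT : IsGTSpace (X →L[ℝ] ℝ)) :
    ∃ c₀, 0 ≤ c₀ ∧ ∀ (x : X →L[ℝ] ℝ) (A : Finset ℕ) (W : ℝ), 0 ≤ W →
      (∀ g : X →L[ℝ] ℝ, ∑ n ∈ A, g (B.e n) ^ 2 ≤ (W * ‖g‖) ^ 2) →
      ∑ n ∈ A, |x (B.e n)| ≤ c₀ * W * (#A : ℝ) ^ t * ‖x‖ := by
  obtain ⟨K, hK⟩ := hGT.exists_uniform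
  have hCt := B.one_le_of_norm_S_le hk
  refine ⟨max K 0 * (2 * Ct), by positivity, fun x A W hW hA => ?_⟩
  rcases A.eq_empty_or_nonempty with rfl | hne
  · simp only [sum_empty]
    positivity
  rcases eq_or_ne x 0 with rfl | hx
  · simp
  have hT : ‖B.coeffMap A‖ ≤ W := ContinuousLinearMap.opNorm_le_bound _ hW fun g =>
    (pow_le_pow_iff_left₀ (norm_nonneg _) (by positivity) two_ne_zero).1
      ((B.norm_coeffMap_apply_sq A g).trans_le (hA g))
  have hM : 0 < 2 * Ct * (#A : ℝ) ^ t * ‖x‖ := by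
    have : (0 : ℝ) < #A := by exact_mod_cast hne.card_pos
    have : 0 < ‖x‖ := norm_pos_iff.2 hx
    positivity
  have hsum := hK (B.coeffMap A) A (fun k => x (B.e k) • B.c k) _ hM fun ε hε =>
    B.norm_sum_sign_smul_apply_e_smul_c_le ht (by linarith) hk A hε x
  have hterm : ∀ k ∈ A, ‖B.coeffMap A (x (B.e k) • B.c k)‖ = |x (B.e k)| := fun k hk => by
    rw [map_smul, B.coeffMap_apply_c hk, norm_smul, lp.norm_single (by norm_num)]
    simp
  rw [sum_congr rfl hterm] at hsum
  calc ∑ n ∈ A, |x (B.e n)| ≤ K * ‖B.coeffMap A‖ * (2 * Ct * (#A : ℝ) ^ t * ‖x‖) := hsum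
    _ ≤ max K 0 * W * (2 * Ct * (#A : ℝ) ^ t * ‖x‖) := by
        gcongr
        exact le_max_left _ _
    _ = _ := by ring

variable {B} in
lemma HasDualSumGrowth.improve {t Ct β σ : ℝ} (ht : 0 ≤ t)
    (hk : ∀ (A : Finset ℕ) (f : X), ‖B.S A f‖ ≤ Ct * (#A : ℝ) ^ t * ‖f‖)
    (hGT : IsGTSpace (X →L[ℝ] ℝ)) (h : B.HasDualSumGrowth β) (hσ : 0 ≤ σ)
    (hβσ : 2 * β - 1 < σ) : B.HasDualSumGrowth (σ / 2 + t) := by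
  obtain ⟨c₀, hc₀, hGTsum⟩ := B.exists_sum_abs_apply_e_le ht hk hGT
  obtain ⟨D, hD, hsq⟩ := h.sum_rpow_le two_pos hσ (by linarith)
  refine ⟨c₀ * √D, by positivity, fun x A => ?_⟩
  have hW : ∀ g : X →L[ℝ] ℝ,
      ∑ n ∈ A, g (B.e n) ^ 2 ≤ (√D * (#A : ℝ) ^ (σ / 2) * ‖g‖) ^ 2 := fun g => by
    calc ∑ n ∈ A, g (B.e n) ^ 2 = ∑ n ∈ A, |g (B.e n)| ^ (2 : ℝ) := by simp
      _ ≤ D * (#A : ℝ) ^ σ * ‖g‖ ^ (2 : ℝ) := hsq g A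
      _ = (√D * (#A : ℝ) ^ (σ / 2) * ‖g‖) ^ 2 := by
          rw [mul_pow, mul_pow, Real.sq_sqrt hD, ← Real.rpow_natCast,
            ← Real.rpow_mul (by positivity), Real.rpow_two]
          ring_nf
  calc ∑ n ∈ A, |x (B.e n)| ≤ c₀ * (√D * (#A : ℝ) ^ (σ / 2)) * (#A : ℝ) ^ t * ‖x‖ :=
        hGTsum x A _ (by positivity) fun g => by simpa [mul_assoc] using hW g
    _ = c₀ * √D * (#A : ℝ) ^ (σ / 2 + t) * ‖x‖ := by
        rw [Real.rpow_add_of_nonneg (Nat.cast_nonneg _) (by positivity) ht]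
        ring

lemma hasDualSumGrowth_of_isGTSpace {t Ct : ℝ} (ht0 : 0 ≤ t) (ht : t < 1 / 2)
    (hk : ∀ (A : Finset ℕ) (f : X), ‖B.S A f‖ ≤ Ct * (#A : ℝ) ^ t * ‖f‖)
    (hGT : IsGTSpace (X →L[ℝ] ℝ)) : B.HasDualSumGrowth t := by
  set η := (1 / 2 - t) / 2 with hη_def
  have hη : 0 < η := by positivity
  have hstep : ∀ β, B.HasDualSumGrowth β → B.HasDualSumGrowth (max t (β - η)) := fun β h => by
    have hσ : 2 * β - 1 < max 0 (2 * β - 1 + 2 * η) := lt_max_of_lt_right (by linarith)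
    convert h.improve ht0 hk hGT (le_max_left _ _) hσ using 1
    rcases le_total 0 (2 * β - 1 + 2 * η) with hle | hle
    · rw [max_eq_right hle, max_eq_right (by linarith)]
      linarith
    · rw [max_eq_left hle, max_eq_left (by linarith)]
      ring
  have hiter : ∀ j : ℕ, B.HasDualSumGrowth (max t (1 - j * η)) := by
    intro j
    induction j with
    | zero => simpa [max_eq_right (by linarith : t ≤ 1)] using B.hasDualSumGrowth_one
    | succ j ih =>
      convert hstep _ ih using 1
      rw [← max_sub_sub_right, ← max_assoc, max_eq_left (by linarith : t - η ≤ t)]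
      push_cast
      ring_nf
  obtain ⟨j, hj⟩ := exists_nat_ge (1 / η)
  have hjη : 1 - j * η ≤ t := by
    rw [div_le_iff₀ hη] at hj
    linarith
  simpa [max_eq_left hjη] using hiter j

end BBasis

theorem stmt7_general {X : Type*} [NormedAddCommGroup X] [NormedSpace ℝ X]
    (B : BBasis X) (t Ct : ℝ) (ht0 : 0 < t) (ht : t < 1 / 2)
    (hk : ∀ (A : Finset ℕ) (f : X), ‖B.S A f‖ ≤ Ct * (A.card : ℝ) ^ t * ‖f‖)
    (hGT : IsGTSpace (X →L[ℝ] ℝ)) :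
    ∀ q : ℝ, 0 < q → q < 1 / t → ∃ Cq : ℝ, ∀ (A : Finset ℕ) (a : ℕ → ℝ),
      ‖∑ n ∈ A, a n • B.e n‖ ≤ Cq * (∑ n ∈ A, |a n| ^ q) ^ (1 / q) := by
  intro q hq0 hq
  rcases le_or_gt q 1 with hq1 | hq1
  · obtain ⟨M, hM⟩ := B.e_bdd
    exact isHilbertian_of_bounded hM hq0 hq1
  · have hqr := Real.HolderConjugate.conjExponent hq1
    have hqt : q * t < 1 := by rwa [lt_div_iff₀ ht0] at hq
    have hr : q.conjExponent * (t - 1) - 0 < -1 := by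
      nlinarith [hqr.mul_eq_add, mul_pos hqr.symm.pos (sub_pos.2 hqt)]
    obtain ⟨D, hD, hdual⟩ := (B.hasDualSumGrowth_of_isGTSpace ht0.le ht hk hGT).sum_rpow_le
      hqr.symm.pos le_rfl hr
    exact isHilbertian_of_sum_rpow_apply_le hqr hD fun g A => by simpa using hdual g A

/-- if the unconditionality constants of a basis of a Banach space `X`
satisfy `𝐤_m ≲ m^t` for some `0 < t < 1/2` and `X*` is a GT space, then the basis is
`q`-Hilbertian for every `q < 1/t`. -/
theorem stmt7 {X : Type*} [NormedAddCommGroup X] [NormedSpace ℝ X] [CompleteSpace X]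
    (B : BBasis X) (t Ct : ℝ) (ht0 : 0 < t) (ht : t < 1 / 2)
    (hk : ∀ (A : Finset ℕ) (f : X), ‖B.S A f‖ ≤ Ct * (A.card : ℝ) ^ t * ‖f‖)
    (hGT : IsGTSpace (X →L[ℝ] ℝ)) :
    ∀ q : ℝ, 0 < q → q < 1 / t → ∃ Cq : ℝ, ∀ (A : Finset ℕ) (a : ℕ → ℝ),
      ‖∑ n ∈ A, a n • B.e n‖ ≤ Cq * (∑ n ∈ A, |a n| ^ q) ^ (1 / q) :=
  stmt7_general B t Ct ht0 ht hk hGT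
end
end
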